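/- arXiv:1705.00088 — 2 statements merged into one kernel-verified Lean document; each statement's English description precedes it below -/
import Mathlib

section
/- Let n, k ≥ 1, let Γ be a subgroup of the orthogonal group O(n) whose fixed-point set Fix Γ = {x ∈ ℝⁿ : γx = x for all γ ∈ Γ} equals {0}, and let K : ℝⁿ → ℝ^{k×k} be a matrix-valued kernel whose entries K_{ij} and x ↦ ‖x‖²K_{ij}(x) are integrable, with K(γx) = K(x) for all x and all γ ∈ Γ. Assume the matrix I_k + ∫_{ℝⁿ} K(x) dx has nontrivial kernel. Then the function 𝒟(ξ) = det(I_k + K̂(ξ)), where K̂(ξ) = ∫ K(x)e^{−i⟨ξ,x⟩} dx is the entrywise Fourier transform, is twice continuously differentiable on ℝⁿ, and satisfies 𝒟(0) = 0 and D𝒟(0) = 0 (the derivative of 𝒟 at the origin vanishes). -/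
/-!
Each entry of `K̂` is, up to rescaling `ξ`, the Fourier transform of an integrable function with
finite second moment, hence `C²`, and the determinant is a polynomial in the entries. At `ξ = 0`
the matrix `I + K̂(0) = I + ∫ K` is singular. Finally, `𝒟 ∘ γ = 𝒟` for `γ ∈ Γ` because `K` is
`Γ`-invariant and `γ` preserves the inner product and Lebesgue measure. Hence `D𝒟(0) ∘ γ = D𝒟(0)`,
so composing `D𝒟(0)` with any real functional gives a functional whose Riesz representative is
fixed by `Γ`, hence zero.
-/

open MeasureTheory Matrix Real FourierTransform
open scoped RealInnerProductSpace

noncomputable section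

section Integrability

variable {V E : Type*} [NormedAddCommGroup V] [MeasurableSpace V] [OpensMeasurableSpace V]
  [NormedAddCommGroup E] {μ : Measure V} {g : V → E}

theorem integrable_norm_mul_of_integrable_sq_mul (h0 : Integrable g μ)
    (h2 : Integrable (fun x => ‖x‖ ^ 2 * ‖g x‖) μ) : Integrable (fun x => ‖x‖ * ‖g x‖) μ := by
  refine (h0.norm.add h2).mono' (continuous_norm.aestronglyMeasurable.mul h0.norm.1)
    (Filter.Eventually.of_forall fun x => ?_)
  have hx : ‖x‖ ≤ 1 + ‖x‖ ^ 2 := by nlinarith [sq_nonneg (‖x‖ - 1)]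
  rw [Real.norm_of_nonneg (by positivity), Pi.add_apply]
  nlinarith [mul_le_mul_of_nonneg_right hx (norm_nonneg (g x))]

end Integrability

section ExpFourier

variable {V : Type*} [NormedAddCommGroup V] [InnerProductSpace ℝ V] [FiniteDimensional ℝ V]
  [MeasurableSpace V] [BorelSpace V]

/-- The Fourier transform with the kernel `e^{-i⟨ξ,x⟩}`; Mathlib's `𝓕` uses `e^{-2πi⟨x,ξ⟩}`. -/
def expFourier (g : V → ℂ) (ξ : V) : ℂ :=
  ∫ x, g x * Complex.exp (-Complex.I * (⟪ξ, x⟫ : ℂ))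

theorem expFourier_eq_fourier_smul (g : V → ℂ) :
    expFourier g = fun ξ => 𝓕 g ((2 * π)⁻¹ • ξ) := by
  funext ξ
  rw [expFourier, Real.fourier_eq']
  congr 1 with x
  have hphase : (-2 * π * ⟪x, (2 * π)⁻¹ • ξ⟫ : ℝ) = -⟪ξ, x⟫ := by
    rw [real_inner_smul_right, real_inner_comm]
    field_simp
  rw [smul_eq_mul, mul_comm, hphase]
  push_cast
  ring_nf

theorem contDiff_two_expFourier {g : V → ℂ} (h0 : Integrable g)
    (h2 : Integrable fun x => ‖x‖ ^ 2 * ‖g x‖) : ContDiff ℝ 2 (expFourier g) := by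
  have hmoments : ∀ m : ℕ, (m : ℕ∞) ≤ 2 → Integrable fun x : V => ‖x‖ ^ m * ‖g x‖ := by
    intro m hm
    have hm2 : m ≤ 2 := by exact_mod_cast hm
    interval_cases m
    · simpa using h0.norm
    · simpa using integrable_norm_mul_of_integrable_sq_mul h0 h2
    · exact h2
  rw [expFourier_eq_fourier_smul]
  exact (Real.contDiff_fourier hmoments).comp (contDiff_id.const_smul _)

theorem expFourier_apply_linearIsometryEquiv {g : V → ℂ} (γ : V ≃ₗᵢ[ℝ] V)
    (hg : ∀ x, g (γ x) = g x) (ξ : V) : expFourier g (γ ξ) = expFourier g ξ := by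
  rw [expFourier, ← γ.measurePreserving.integral_comp γ.toHomeomorph.measurableEmbedding]
  simp only [hg, LinearIsometryEquiv.inner_map_map]
  rfl

end ExpFourier

theorem contDiff_det_of_forall_entry {𝕜 E 𝔸 ι : Type*} [NontriviallyNormedField 𝕜]
    [NormedAddCommGroup E] [NormedSpace 𝕜 E] [NormedCommRing 𝔸] [NormedAlgebra 𝕜 𝔸]
    [Fintype ι] [DecidableEq ι] {N : WithTop ℕ∞} {A : E → Matrix ι ι 𝔸}
    (hA : ∀ i j, ContDiff 𝕜 N fun x => A x i j) : ContDiff 𝕜 N fun x => (A x).det := by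
  simp only [Matrix.det_apply]
  exact ContDiff.sum fun σ _ => (contDiff_prod fun i _ => hA (σ i) i).const_smul _

section InvariantDerivative

variable {V F : Type*} [NormedAddCommGroup V] [InnerProductSpace ℝ V] [CompleteSpace V]
  [NormedAddCommGroup F] [NormedSpace ℝ F] {S : Set (V ≃ₗᵢ[ℝ] V)}

theorem StrongDual.eq_zero_of_comp_linearIsometryEquiv_eq
    (hfix : ∀ x : V, (∀ γ ∈ S, γ x = x) → x = 0) (φ : StrongDual ℝ V)
    (hφ : ∀ γ ∈ S, ∀ x, φ (γ x) = φ x) : φ = 0 := by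
  set u := (InnerProductSpace.toDual ℝ V).symm φ
  have hu : ∀ x, ⟪u, x⟫ = φ x := fun _ => InnerProductSpace.toDual_symm_apply
  have hu0 : u = 0 := hfix u fun γ hγ => ext_inner_right ℝ fun x => by
    rw [← γ.apply_symm_apply x, γ.inner_map_map, hu, hu, hφ γ hγ]
  ext x
  rw [← hu, hu0, inner_zero_left]
  rfl

theorem ContinuousLinearMap.eq_zero_of_comp_linearIsometryEquiv_eq
    (hfix : ∀ x : V, (∀ γ ∈ S, γ x = x) → x = 0) (L : V →L[ℝ] F)
    (hL : ∀ γ ∈ S, ∀ x, L (γ x) = L x) : L = 0 := by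
  ext x
  refine SeparatingDual.eq_zero_of_forall_dual_eq_zero (R := ℝ) fun T => ?_
  have hTL := StrongDual.eq_zero_of_comp_linearIsometryEquiv_eq hfix (T.comp L)
    fun γ hγ y => by simp only [ContinuousLinearMap.comp_apply, hL γ hγ]
  simpa using congrArg (· x) hTL

theorem fderiv_zero_eq_zero_of_comp_linearIsometryEquiv_eq
    (hfix : ∀ x : V, (∀ γ ∈ S, γ x = x) → x = 0) (f : V → F)
    (hf : ∀ γ ∈ S, ∀ x, f (γ x) = f x) : fderiv ℝ f 0 = 0 := by
  refine (fderiv ℝ f 0).eq_zero_of_comp_linearIsometryEquiv_eq hfix fun γ hγ x => ?_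
  have hcomp : fderiv ℝ (f ∘ γ) 0 = (fderiv ℝ f (γ 0)).comp (γ : V →L[ℝ] V) :=
    γ.toContinuousLinearEquiv.comp_right_fderiv
  rw [show f ∘ γ = f from funext (hf γ hγ), map_zero] at hcomp
  exact (congrArg (· x) hcomp).symm

end InvariantDerivative

end

theorem fourier_determinant_double_root_general (n k : ℕ)
    (Γ : Subgroup (EuclideanSpace ℝ (Fin n) ≃ₗᵢ[ℝ] EuclideanSpace ℝ (Fin n)))
    (hfix : ∀ x : EuclideanSpace ℝ (Fin n), (∀ γ ∈ Γ, γ x = x) → x = 0)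
    (K : EuclideanSpace ℝ (Fin n) → Matrix (Fin k) (Fin k) ℝ)
    (hK : ∀ i j, Integrable (fun x => K x i j))
    (hK2 : ∀ i j, Integrable (fun x => ‖x‖ ^ 2 * K x i j))
    (hsym : ∀ γ ∈ Γ, ∀ x, K (γ x) = K x)
    (hker : ∃ v : Fin k → ℝ, v ≠ 0 ∧
      ((1 : Matrix (Fin k) (Fin k) ℝ) + Matrix.of fun i j => ∫ x, K x i j).mulVec v = 0) :
    ContDiff ℝ 2 (fun ξ : EuclideanSpace ℝ (Fin n) =>
      ((1 : Matrix (Fin k) (Fin k) ℂ) + Matrix.of fun i j =>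
        ∫ x, (K x i j : ℂ) * Complex.exp (-Complex.I * (⟪ξ, x⟫ : ℂ))).det) ∧
    ((1 : Matrix (Fin k) (Fin k) ℂ) + Matrix.of fun i j =>
        ∫ x, (K x i j : ℂ) * Complex.exp (-Complex.I * (⟪(0 : EuclideanSpace ℝ (Fin n)), x⟫ : ℂ))).det = 0 ∧
    fderiv ℝ (fun ξ : EuclideanSpace ℝ (Fin n) =>
      ((1 : Matrix (Fin k) (Fin k) ℂ) + Matrix.of fun i j =>
        ∫ x, (K x i j : ℂ) * Complex.exp (-Complex.I * (⟪ξ, x⟫ : ℂ))).det) 0 = 0 := by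
  refine ⟨contDiff_det_of_forall_entry fun i j => ?_, ?_,
    fderiv_zero_eq_zero_of_comp_linearIsometryEquiv_eq (S := Γ) hfix _ fun γ hγ ξ => ?_⟩
  · refine contDiff_const.add (contDiff_two_expFourier (hK i j).ofReal ?_)
    simpa [norm_mul] using (hK2 i j).norm
  · obtain ⟨v, hv, hAv⟩ := hker
    calc _ = (Complex.ofRealHom.mapMatrix (1 + of fun i j => ∫ x, K x i j)).det := by
          congr 1
          ext i j
          simp [integral_complex_ofReal, one_apply, apply_ite]
      _ = 0 := by rw [← RingHom.map_det, exists_mulVec_eq_zero_iff.mp ⟨v, hv, hAv⟩, map_zero]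
  · exact congrArg (fun A => ((1 : Matrix (Fin k) (Fin k) ℂ) + of A).det) <| funext₂ fun i j =>
      expFourier_apply_linearIsometryEquiv (g := fun x => (K x i j : ℂ)) γ
        (fun x => by rw [hsym γ hγ x]) ξ

/-- For a `Γ`-invariant matrix kernel `K : ℝⁿ → ℝ^{k×k}` with integrable
entries and second moments, where `Γ` is a subgroup of the orthogonal group with trivial
fixed-point set, if `I + ∫K` has nontrivial kernel then the Fourier determinant
`𝒟(ξ) = det(I + K̂(ξ))` is `C²` and satisfies `𝒟(0) = 0` and `D𝒟(0) = 0`. -/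
theorem fourier_determinant_double_root (n k : ℕ) (hn : 1 ≤ n) (hk : 1 ≤ k)
    (Γ : Subgroup (EuclideanSpace ℝ (Fin n) ≃ₗᵢ[ℝ] EuclideanSpace ℝ (Fin n)))
    (hfix : ∀ x : EuclideanSpace ℝ (Fin n), (∀ γ ∈ Γ, γ x = x) → x = 0)
    (K : EuclideanSpace ℝ (Fin n) → Matrix (Fin k) (Fin k) ℝ)
    (hK : ∀ i j, Integrable (fun x => K x i j))
    (hK2 : ∀ i j, Integrable (fun x => ‖x‖ ^ 2 * K x i j))
    (hsym : ∀ γ ∈ Γ, ∀ x, K (γ x) = K x)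
    (hker : ∃ v : Fin k → ℝ, v ≠ 0 ∧
      ((1 : Matrix (Fin k) (Fin k) ℝ) + Matrix.of fun i j => ∫ x, K x i j).mulVec v = 0) :
    ContDiff ℝ 2 (fun ξ : EuclideanSpace ℝ (Fin n) =>
      ((1 : Matrix (Fin k) (Fin k) ℂ) + Matrix.of fun i j =>
        ∫ x, (K x i j : ℂ) * Complex.exp (-Complex.I * (⟪ξ, x⟫ : ℂ))).det) ∧
    ((1 : Matrix (Fin k) (Fin k) ℂ) + Matrix.of fun i j =>
        ∫ x, (K x i j : ℂ) * Complex.exp (-Complex.I * (⟪(0 : EuclideanSpace ℝ (Fin n)), x⟫ : ℂ))).det = 0 ∧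
    fderiv ℝ (fun ξ : EuclideanSpace ℝ (Fin n) =>
      ((1 : Matrix (Fin k) (Fin k) ℂ) + Matrix.of fun i j =>
        ∫ x, (K x i j : ℂ) * Complex.exp (-Complex.I * (⟪ξ, x⟫ : ℂ))).det) 0 = 0 :=
  fourier_determinant_double_root_general n k Γ hfix K hK hK2 hsym hker
end

section
/- Let n ≥ 1 and let Γ be a subgroup of the orthogonal group O(n) whose fixed-point set Fix Γ = {x ∈ ℝⁿ : γx = x for all γ ∈ Γ} equals {0}. Let v : ℝⁿ → ℝ be differentiable, radially symmetric in the sense that v(ρx) = v(x) for every ρ ∈ O(n) and every x ∈ ℝⁿ, and not constant. If a ∈ ℝⁿ satisfies ⟨a, ∇v(γx)⟩ = ⟨a, ∇v(x)⟩ for all γ ∈ Γ and all x ∈ ℝⁿ, then a = 0. -/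
/-!
If `⟪a, ∇v(γx)⟫ = ⟪a, ∇v(x)⟫` on `Γ`, the chain rule `∇v(γx) = γ ∇v(x)` for the radial `v`
turns this into `⟪γ⁻¹a - a, ∇v(x)⟫ = 0` for all `x`. Since `v` is not constant some gradient is
nonzero, and since `O(n)` acts transitively on spheres (already through reflections) the
gradients of `v` then fill a whole sphere of positive radius, so `γ⁻¹a - a = 0`. Thus `a ∈ Fix Γ = {0}`.
-/

open scoped RealInnerProductSpace

variable {E : Type*} [NormedAddCommGroup E] [InnerProductSpace ℝ E]

theorem exists_linearIsometryEquiv_apply_eq {x y : E} (h : ‖x‖ = ‖y‖) :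
    ∃ ρ : E ≃ₗᵢ[ℝ] E, ρ x = y :=
  ⟨_, Submodule.reflection_sub h⟩

variable [CompleteSpace E]

theorem HasGradientAt.comp_linearIsometryEquiv {v : E → ℝ} {g x : E} (ρ : E ≃ₗᵢ[ℝ] E)
    (h : HasGradientAt v g (ρ x)) : HasGradientAt (v ∘ ρ) (ρ.symm g) x := by
  have hdual : InnerProductSpace.toDual ℝ E (ρ.symm g)
      = (InnerProductSpace.toDual ℝ E g).comp (ρ : E →L[ℝ] E) := by
    ext y
    simp [LinearIsometryEquiv.inner_map_eq_flip]
  rw [hasGradientAt_iff_hasFDerivAt, hdual]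
  exact (hasGradientAt_iff_hasFDerivAt.1 h).comp x ρ.toContinuousLinearEquiv.hasFDerivAt

theorem gradient_apply_linearIsometryEquiv {v : E → ℝ} (hv : Differentiable ℝ v)
    (ρ : E ≃ₗᵢ[ℝ] E) (hρ : ∀ y, v (ρ y) = v y) (x : E) :
    gradient v (ρ x) = ρ (gradient v x) := by
  have h := (hv (ρ x)).hasGradientAt.comp_linearIsometryEquiv ρ
  rw [show v ∘ ρ = v from funext hρ] at h
  rw [h.gradient, ρ.apply_symm_apply]

theorem exists_gradient_ne_zero {v : E → ℝ} (hv : Differentiable ℝ v)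
    (hnc : ¬∃ c : ℝ, ∀ x, v x = c) : ∃ x, gradient v x ≠ 0 := by
  by_contra! h
  refine hnc ⟨v 0, fun x => is_const_of_fderiv_eq_zero hv (fun y => ?_) x 0⟩
  rw [← toDual_gradient, h y, map_zero]

theorem exists_gradient_eq_of_norm_eq {v : E → ℝ} (hv : Differentiable ℝ v)
    (hrad : ∀ (ρ : E ≃ₗᵢ[ℝ] E) (y : E), v (ρ y) = v y) {x w : E} (h : ‖gradient v x‖ = ‖w‖) :
    ∃ y, gradient v y = w := by
  obtain ⟨ρ, hρ⟩ := exists_linearIsometryEquiv_apply_eq h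
  exact ⟨ρ x, by rw [gradient_apply_linearIsometryEquiv hv ρ (hrad ρ), hρ]⟩

theorem eq_zero_of_forall_inner_gradient_eq_zero {v : E → ℝ} (hv : Differentiable ℝ v)
    (hrad : ∀ (ρ : E ≃ₗᵢ[ℝ] E) (y : E), v (ρ y) = v y) (hnc : ¬∃ c : ℝ, ∀ x, v x = c) {d : E}
    (hd : ∀ x, ⟪d, gradient v x⟫ = 0) : d = 0 := by
  obtain ⟨x₀, hx₀⟩ := exists_gradient_ne_zero hv hnc
  by_contra hd0
  set c := ‖gradient v x₀‖ / ‖d‖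
  have hc : 0 < c := div_pos (norm_pos_iff.2 hx₀) (norm_pos_iff.2 hd0)
  obtain ⟨y, hy⟩ := exists_gradient_eq_of_norm_eq hv hrad (x := x₀) (w := c • d)
    (by rw [norm_smul, Real.norm_of_nonneg hc.le, div_mul_cancel₀ _ (norm_ne_zero_iff.2 hd0)])
  have h := hd y
  rw [hy, real_inner_smul_right, real_inner_self_eq_norm_sq] at h
  simp [hc.ne', hd0] at h

theorem no_invariant_kernel_element_general (n : ℕ)
    (Γ : Subgroup (EuclideanSpace ℝ (Fin n) ≃ₗᵢ[ℝ] EuclideanSpace ℝ (Fin n)))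
    (hfix : ∀ x : EuclideanSpace ℝ (Fin n), (∀ γ ∈ Γ, γ x = x) → x = 0)
    (v : EuclideanSpace ℝ (Fin n) → ℝ) (hv : Differentiable ℝ v)
    (hrad : ∀ (ρ : EuclideanSpace ℝ (Fin n) ≃ₗᵢ[ℝ] EuclideanSpace ℝ (Fin n))
      (x : EuclideanSpace ℝ (Fin n)), v (ρ x) = v x)
    (hnc : ¬∃ c : ℝ, ∀ x, v x = c)
    (a : EuclideanSpace ℝ (Fin n))
    (ha : ∀ γ ∈ Γ, ∀ x, ⟪a, gradient v (γ x)⟫ = ⟪a, gradient v x⟫) :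
    a = 0 := by
  refine hfix a fun γ hγ => ?_
  have horth : ∀ x, ⟪γ.symm a - a, gradient v x⟫ = 0 := fun x => by
    rw [inner_sub_left, LinearIsometryEquiv.inner_map_eq_flip, LinearIsometryEquiv.symm_symm,
      ← gradient_apply_linearIsometryEquiv hv γ (hrad γ), ha γ hγ, sub_self]
  have hfixed := sub_eq_zero.1 (eq_zero_of_forall_inner_gradient_eq_zero hv hrad hnc horth)
  exact (γ.symm_apply_eq.1 hfixed).symm

/-- If `Γ` is a subgroup of the orthogonal group with trivial fixed-point
set, `v` is a differentiable, radially symmetric, nonconstant function on ℝⁿ, and `a`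
satisfies `⟨a, ∇v(γx)⟩ = ⟨a, ∇v(x)⟩` for all `γ ∈ Γ` and all `x`, then `a = 0`. -/
theorem no_invariant_kernel_element (n : ℕ) (hn : 1 ≤ n)
    (Γ : Subgroup (EuclideanSpace ℝ (Fin n) ≃ₗᵢ[ℝ] EuclideanSpace ℝ (Fin n)))
    (hfix : ∀ x : EuclideanSpace ℝ (Fin n), (∀ γ ∈ Γ, γ x = x) → x = 0)
    (v : EuclideanSpace ℝ (Fin n) → ℝ) (hv : Differentiable ℝ v)
    (hrad : ∀ (ρ : EuclideanSpace ℝ (Fin n) ≃ₗᵢ[ℝ] EuclideanSpace ℝ (Fin n))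
      (x : EuclideanSpace ℝ (Fin n)), v (ρ x) = v x)
    (hnc : ¬∃ c : ℝ, ∀ x, v x = c)
    (a : EuclideanSpace ℝ (Fin n))
    (ha : ∀ γ ∈ Γ, ∀ x, ⟪a, gradient v (γ x)⟫ = ⟪a, gradient v x⟫) :
    a = 0 :=
  no_invariant_kernel_element_general n Γ hfix v hv hrad hnc a ha
end
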